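/- arXiv:2006.13326 — 6 statements merged into one kernel-verified Lean document; each statement's English description precedes it below -/
import Mathlib

section
/- Let A be an m×d real matrix, b ∈ ℝ^m, and D = {x ∈ ℝ^d : Ax ≤ b} be nonempty and compact. For τ > 0 define D_τ = {x ∈ ℝ^d : Ax + τ·𝟙 ≤ b}, assumed nonempty, and suppose ρ > 0 lower-bounds the smallest singular value of A_B for every d×d invertible submatrix A_B of A corresponding to d constraints meeting at an active point of D. Then for every x ∈ ℝ^d, dist(x, D_τ) ≤ dist(x, D) + (√d / ρ)·τ. -/
open Function Set Filter Topology
open scoped RealInnerProductSpace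

/-!
Let `y` be a point of `D` nearest to `x` and `w` the point of `D_τ` nearest to `y`. Then `y - w`
lies in the normal cone of `D_τ` at `w`, which by Farkas' lemma is generated by the rows of `A`
active at `w`. By Carathéodory's theorem for cones these rows may be taken linearly independent,
and, since the rows of `A` span (`D` is bounded), they extend to `d` rows forming an invertible
submatrix `A_B`. Writing `y - w = A_Bᵀ ν` with `ν ≥ 0`, every active row satisfies
`⟪a_i, y - w⟫ ≤ τ`, so `‖y - w‖² ≤ τ ∑ ν ≤ τ √d ‖ν‖ ≤ τ √d ‖y - w‖ / ρ`, where the last step uses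
that `A_Bᵀ` has the same smallest singular value as `A_B`.
-/

section Caratheodory

variable {ι M : Type*} [Fintype ι] [AddCommGroup M]

theorem Fintype.linearIndepOn_iff {R : Type*} [Ring R] [Module R M] {a : ι → M} {s : Set ι} :
    LinearIndepOn R a s ↔ ∀ g : ι → R, g.support ⊆ s → ∑ i, g i • a i = 0 → g = 0 := by
  classical
  rw [← s.coe_toFinset, linearIndepOn_finset_iff]
  refine ⟨fun h g hg hsum => funext fun i => ?_, fun h f hf i hi => ?_⟩
  · by_contra hi
    refine hi (h g ?_ i (hg hi))
    rwa [Finset.sum_subset (Finset.subset_univ _) fun j _ hj => ?_]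
    rw [notMem_support.mp (mt (@hg j) hj), zero_smul]
  · have hind := h ((s.toFinset : Set ι).indicator f) support_indicator_subset (by
      simpa [indicator_apply, ite_smul, ← Finset.sum_filter, ← Set.filter_mem_univ_eq_toFinset]
        using hf)
    simpa [mem_toFinset.mp hi] using congr_fun hind i

variable {𝕜 : Type*} [Field 𝕜] [LinearOrder 𝕜] [IsStrictOrderedRing 𝕜] [Module 𝕜 M] {a : ι → M}

theorem exists_nonneg_support_ssubset_sum_smul_eq {c : ι → 𝕜} (hc : 0 ≤ c)
    (hdep : ¬LinearIndepOn 𝕜 a c.support) :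
    ∃ c' : ι → 𝕜, 0 ≤ c' ∧ c'.support ⊂ c.support ∧ ∑ i, c' i • a i = ∑ i, c i • a i := by
  classical
  obtain ⟨g, hgc, hg0, k, hk⟩ :
      ∃ g : ι → 𝕜, g.support ⊆ c.support ∧ ∑ i, g i • a i = 0 ∧ ∃ k, 0 < g k := by
    simp only [Fintype.linearIndepOn_iff, not_forall] at hdep
    obtain ⟨g, hgc, hg0, hne⟩ := hdep
    obtain ⟨k, hk⟩ := ne_iff.mp hne
    rcases (hk : g k ≠ 0).lt_or_gt with hneg | hpos
    · exact ⟨-g, by simpa using hgc, by simp [hg0], k, by simpa using hneg⟩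
    · exact ⟨g, hgc, hg0, k, hpos⟩
  -- shrink `c` along `-g` until its first coordinate with `g > 0` vanishes
  obtain ⟨j, hj, hmin⟩ := (Finset.univ.filter (0 < g ·)).exists_min_image (fun i => c i / g i)
    ⟨k, by simpa using hk⟩
  simp only [Finset.mem_filter, Finset.mem_univ, true_and] at hj hmin
  set t := c j / g j
  have hcj : c j - t * g j = 0 := by simp [t, hj.ne']
  have hg_of_c : ∀ i, c i = 0 → g i = 0 := fun i => by
    simpa only [notMem_support] using mt (@hgc i)
  refine ⟨c - t • g, fun i => ?_, ssubset_iff_subset_ne.mpr ⟨fun i hi => ?_, fun heq => ?_⟩, ?_⟩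
  · simp only [Pi.zero_apply, Pi.sub_apply, Pi.smul_apply, smul_eq_mul, sub_nonneg]
    rcases lt_or_ge 0 (g i) with hgi | hgi
    · exact (le_div_iff₀ hgi).mp (hmin i hgi)
    · exact (mul_nonpos_of_nonneg_of_nonpos (div_nonneg (hc j) hj.le) hgi).trans (hc i)
  · refine mem_support.mpr fun hci => hi ?_
    simp [hci, hg_of_c i hci]
  · have : j ∈ (c - t • g).support := heq ▸ mem_support.mpr fun h => hj.ne' (hg_of_c j h)
    exact this hcj
  · simp [sub_smul, Finset.sum_sub_distrib, mul_smul, ← Finset.smul_sum, hg0]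

theorem exists_nonneg_linearIndepOn_support_sum_smul_eq {c : ι → 𝕜} (hc : 0 ≤ c) :
    ∃ μ : ι → 𝕜, 0 ≤ μ ∧ μ.support ⊆ c.support ∧ LinearIndepOn 𝕜 a μ.support ∧
      ∑ i, μ i • a i = ∑ i, c i • a i := by
  induction hn : c.support.ncard using Nat.strong_induction_on generalizing c with
  | _ n ih =>
    by_cases hli : LinearIndepOn 𝕜 a c.support
    · exact ⟨c, hc, subset_rfl, hli, rfl⟩
    obtain ⟨c', hc', hss, hsum⟩ := exists_nonneg_support_ssubset_sum_smul_eq hc hli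
    obtain ⟨μ, hμ, hμc', hμli, hμsum⟩ :=
      ih _ (hn ▸ ncard_lt_ncard hss) hc' rfl
    exact ⟨μ, hμ, hμc'.trans hss.subset, hμli, hμsum.trans hsum⟩

end Caratheodory

section Farkas

variable {ι E : Type*} [Fintype ι]

theorem isClosed_image_linearCombination_nonneg [NormedAddCommGroup E] [NormedSpace ℝ E]
    [FiniteDimensional ℝ E] (a : ι → E) :
    IsClosed (Fintype.linearCombination ℝ a '' {c | 0 ≤ c}) := by
  set L := Fintype.linearCombination ℝ a
  have hunion : L '' {c | 0 ≤ c} =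
      ⋃ (S : Set ι) (_ : LinearIndepOn ℝ a S), L '' {c | 0 ≤ c ∧ c.support ⊆ S} := by
    refine Subset.antisymm ?_ (iUnion₂_subset fun S _ => image_mono fun c hc => hc.1)
    rintro _ ⟨c, hc, rfl⟩
    obtain ⟨μ, hμ, -, hμli, hμsum⟩ := exists_nonneg_linearIndepOn_support_sum_smul_eq (a := a) hc
    exact mem_iUnion₂.mpr ⟨μ.support, hμli, μ, ⟨hμ, subset_rfl⟩,
      by simpa [L, Fintype.linearCombination_apply] using hμsum⟩
  rw [hunion]
  refine isClosed_iUnion_of_finite fun S => isClosed_iUnion_of_finite fun hS => ?_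
  -- on coefficients supported in `S`, `L` is injective, hence a closed embedding
  let V : Submodule ℝ (ι → ℝ) := Submodule.pi Sᶜ fun _ => ⊥
  have hV : ∀ c, c ∈ V ↔ c.support ⊆ S := fun c => by
    simp [V, Submodule.mem_pi, not_imp_comm]
  have hinj : LinearMap.ker (L.domRestrict V) = ⊥ := by
    refine LinearMap.ker_eq_bot'.mpr fun c hc => Subtype.ext ?_
    exact Fintype.linearIndepOn_iff.mp hS c ((hV c).mp c.2)
      (by simpa [L, Fintype.linearCombination_apply] using hc)
  have himage : L '' {c | 0 ≤ c ∧ c.support ⊆ S} = L.domRestrict V '' {c | 0 ≤ (c : ι → ℝ)} := by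
    ext x
    simp only [mem_image, mem_ofPred_eq, Subtype.exists, LinearMap.domRestrict_apply, hV]
    tauto
  rw [himage]
  exact (LinearMap.isClosedEmbedding_of_injective hinj).isClosedMap _
    (isClosed_le continuous_const continuous_subtype_val)

theorem exists_nonneg_sum_smul_eq_of_forall_inner_nonpos [NormedAddCommGroup E]
    [InnerProductSpace ℝ E] [FiniteDimensional ℝ E] (a : ι → E) {u : E}
    (hu : ∀ y, (∀ i, ⟪a i, y⟫ ≤ 0) → ⟪u, y⟫ ≤ 0) :
    ∃ μ : ι → ℝ, 0 ≤ μ ∧ ∑ i, μ i • a i = u := by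
  classical
  let C : ProperCone ℝ E :=
    { toSubmodule := (PointedCone.positive ℝ (ι → ℝ)).map (Fintype.linearCombination ℝ a)
      isClosed' := isClosed_image_linearCombination_nonneg a }
  have hmem : ∀ x, x ∈ C ↔ ∃ μ : ι → ℝ, 0 ≤ μ ∧ ∑ i, μ i • a i = x := fun x => by
    change x ∈ (PointedCone.positive ℝ (ι → ℝ)).map (Fintype.linearCombination ℝ a) ↔ _
    simp [PointedCone.mem_map, PointedCone.mem_positive, Fintype.linearCombination_apply]
  by_contra hne
  obtain ⟨y, hCy, hy⟩ := C.hyperplane_separation' fun h => hne ((hmem u).mp h)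
  have hai : ∀ i, ⟪a i, -y⟫ ≤ 0 := fun i => by
    simpa using hCy _ ((hmem _).mpr ⟨Pi.single i 1, by simp [Pi.single_nonneg], by simp⟩)
  have := hu _ hai
  rw [inner_neg_right] at this
  linarith

end Farkas

section Polyhedron

variable {ι E : Type*}

def polyhedron [Inner ℝ E] (a : ι → E) (c : ι → ℝ) : Set E := {x | ∀ i, ⟪a i, x⟫ ≤ c i}

variable [NormedAddCommGroup E] [InnerProductSpace ℝ E] {a : ι → E} {c : ι → ℝ}

@[simp]
theorem mem_polyhedron {x : E} : x ∈ polyhedron a c ↔ ∀ i, ⟪a i, x⟫ ≤ c i := Iff.rfl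

theorem isClosed_polyhedron : IsClosed (polyhedron a c) := by
  simp only [polyhedron, ofPred_forall]
  exact isClosed_iInter fun i => isClosed_le (continuous_const.inner continuous_id) continuous_const

theorem convex_polyhedron : Convex ℝ (polyhedron a c) := by
  simp only [polyhedron, ofPred_forall]
  exact convex_iInter fun i => convex_halfSpace_le (innerₛₗ ℝ (a i)).isLinear (c i)

theorem exists_pos_add_smul_mem_polyhedron [Finite ι] {w v : E} (hw : w ∈ polyhedron a c)
    (hv : ∀ i, ⟪a i, w⟫ = c i → ⟪a i, v⟫ ≤ 0) : ∃ t : ℝ, 0 < t ∧ w + t • v ∈ polyhedron a c := by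
  have hev : ∀ᶠ t in 𝓝[>] (0 : ℝ), w + t • v ∈ polyhedron a c := by
    refine eventually_all.mpr fun i => ?_
    rcases (hw i).eq_or_lt with hact | hslack
    · filter_upwards [self_mem_nhdsWithin] with t (ht : 0 < t)
      rw [inner_add_right, inner_smul_right, hact]
      nlinarith [hv i hact]
    · have hcont : Continuous fun t : ℝ => ⟪a i, w + t • v⟫ := by fun_prop
      have := (hcont.tendsto 0).eventually (gt_mem_nhds (by simpa using hslack))
      exact (this.filter_mono nhdsWithin_le_nhds).mono fun t ht => ht.le
  exact (hev.and self_mem_nhdsWithin).exists.imp fun t ht => ⟨ht.2, ht.1⟩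

theorem exists_active_multipliers_of_forall_inner_sub_nonpos [Fintype ι] [FiniteDimensional ℝ E]
    {w u : E} (hw : w ∈ polyhedron a c) (hu : ∀ z ∈ polyhedron a c, ⟪u, z - w⟫ ≤ 0) :
    ∃ μ : ι → ℝ, 0 ≤ μ ∧ (∀ i, μ i ≠ 0 → ⟪a i, w⟫ = c i) ∧ LinearIndepOn ℝ a μ.support ∧
      ∑ i, μ i • a i = u := by
  classical
  set active := {i | ⟪a i, w⟫ = c i}
  -- Farkas for the active rows alone: the inactive ones are replaced by `0`
  obtain ⟨μ, hμ, hμsum⟩ := exists_nonneg_sum_smul_eq_of_forall_inner_nonpos (active.indicator a)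
    (u := u) fun v hv => by
      obtain ⟨t, ht, htv⟩ := exists_pos_add_smul_mem_polyhedron hw fun i hi => by
        simpa [indicator_of_mem (show i ∈ active from hi)] using hv i
      have := hu _ htv
      rw [add_sub_cancel_left, inner_smul_right] at this
      exact nonpos_of_mul_nonpos_right this ht
  obtain ⟨ν, hν, hνμ, hνli, hνsum⟩ :=
    exists_nonneg_linearIndepOn_support_sum_smul_eq (a := a) (c := active.indicator μ)
      (indicator_nonneg fun i _ => hμ i)
  refine ⟨ν, hν, fun i hi => ?_, hνli, ?_⟩
  · exact (support_indicator_subset (hνμ hi) : i ∈ active)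
  · rw [hνsum, ← hμsum]
    refine Finset.sum_congr rfl fun i _ => ?_
    by_cases hi : i ∈ active <;> simp [hi]

theorem span_range_eq_top_of_isCompact_polyhedron [FiniteDimensional ℝ E]
    (hP : IsCompact (polyhedron a c)) (hne : (polyhedron a c).Nonempty) :
    Submodule.span ℝ (range a) = ⊤ := by
  by_contra hspan
  obtain ⟨v, hv, hv0⟩ := Submodule.exists_mem_ne_zero_of_ne_bot
    (by rwa [Ne, Submodule.orthogonal_eq_bot_iff] : (Submodule.span ℝ (range a))ᗮ ≠ ⊥)
  have hav : ∀ i, ⟪a i, v⟫ = 0 := fun i =>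
    Submodule.inner_right_of_mem_orthogonal (Submodule.subset_span (mem_range_self i)) hv
  obtain ⟨x, hx⟩ := hne
  have hline : ∀ t : ℝ, x + t • v ∈ polyhedron a c := fun t i => by
    simpa [inner_add_right, inner_smul_right, hav] using hx i
  -- the line `x + ℝ v` lies in the polyhedron, but `⟪v, ·⟫` is bounded on it
  obtain ⟨M, hM⟩ := hP.bddAbove_image (f := fun z => ⟪v, z⟫)
    (continuous_const.inner continuous_id).continuousOn
  have hvv : 0 < ⟪v, v⟫ := real_inner_self_pos.mpr hv0
  have := hM (mem_image_of_mem _ (hline ((M + 1 - ⟪v, x⟫) / ⟪v, v⟫)))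
  simp only [inner_add_right, inner_smul_right, div_mul_cancel₀ _ hvv.ne'] at this
  linarith

theorem norm_sub_sq_le_mul_sum {τ : ℝ} {y w : E} {μ : ι → ℝ} [Fintype ι] (hμ : 0 ≤ μ)
    (hy : y ∈ polyhedron a c) (hact : ∀ i, μ i ≠ 0 → ⟪a i, w⟫ = c i - τ)
    (hμu : ∑ i, μ i • a i = y - w) : ‖y - w‖ ^ 2 ≤ τ * ∑ i, μ i := by
  have hμτ : ∀ i, μ i * ⟪a i, y - w⟫ ≤ μ i * τ := fun i => by
    by_cases hi : μ i = 0
    · simp [hi]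
    refine mul_le_mul_of_nonneg_left ?_ (hμ i)
    have := hy i
    rw [inner_sub_right, hact i hi]
    linarith
  calc ‖y - w‖ ^ 2 = ∑ i, μ i * ⟪a i, y - w⟫ := by
        rw [← real_inner_self_eq_norm_sq]
        nth_rewrite 1 [← hμu]
        simp [sum_inner, inner_smul_left]
    _ ≤ ∑ i, μ i * τ := Finset.sum_le_sum fun i _ => hμτ i
    _ = τ * ∑ i, μ i := by rw [← Finset.sum_mul, mul_comm]

end Polyhedron

theorem exists_linearIndependent_comp_of_linearIndepOn {ι K V : Type*} [Field K] [AddCommGroup V]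
    [Module K V] [FiniteDimensional K V] {a : ι → V} (ha : Submodule.span K (range a) = ⊤)
    {S : Set ι} (hS : LinearIndepOn K a S) :
    ∃ B : Fin (Module.finrank K V) → ι, LinearIndependent K (a ∘ B) ∧ S ⊆ range B := by
  obtain ⟨b, -, hSb, hspan, hb⟩ := exists_linearIndepOn_extension hS (subset_univ S)
  have hbspan : Submodule.span K (range fun i : b => a i) = ⊤ := by
    rw [eq_top_iff, ← ha, Submodule.span_le, ← image_univ]
    simpa [range_comp, ← image_eq_range] using hspan
  let basis := Module.Basis.mk hb hbspan.ge
  have : Finite b := Module.Finite.finite_basis basis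
  let e : Fin (Module.finrank K V) ≃ b :=
    (finCongr (Module.finrank_eq_nat_card_basis basis)).trans (Finite.equivFin b).symm
  refine ⟨Subtype.val ∘ e, hb.comp e e.injective, fun i hi => ⟨e.symm ⟨i, hSb hi⟩, by simp⟩⟩

theorem sum_le_sqrt_card_mul_norm {ι : Type*} [Fintype ι] (ν : EuclideanSpace ℝ ι) :
    ∑ i, ν i ≤ √(Fintype.card ι) * ‖ν‖ := by
  have hone : ‖(WithLp.toLp 2 fun _ : ι => (1 : ℝ))‖ = √(Fintype.card ι) := by
    simp [EuclideanSpace.norm_eq]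
  simpa [PiLp.inner_apply, hone, mul_comm] using real_inner_le_norm ν (WithLp.toLp 2 fun _ => 1)

-- `u` is `T† w`: for surjective `T`, a lower bound on `T` passes to its adjoint.
theorem mul_norm_le_norm_of_forall_inner_eq {E F : Type*} [NormedAddCommGroup E]
    [InnerProductSpace ℝ E] [NormedAddCommGroup F] [InnerProductSpace ℝ F] {T : E →ₗ[ℝ] F}
    (hT : Surjective T) {ρ : ℝ} (hρ : ∀ v, ρ * ‖v‖ ≤ ‖T v‖) {u : E} {w : F}
    (huw : ∀ x, ⟪u, x⟫ = ⟪w, T x⟫) :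
    ρ * ‖w‖ ≤ ‖u‖ := by
  obtain ⟨g, rfl⟩ := hT w
  rcases le_or_gt ρ 0 with hρ0 | hρ0
  · nlinarith [norm_nonneg (T g), norm_nonneg u]
  rcases (norm_nonneg (T g)).eq_or_lt with h0 | hpos
  · rw [← h0, mul_zero]; exact norm_nonneg u
  refine le_of_mul_le_mul_right ?_ hpos
  calc ρ * ‖T g‖ * ‖T g‖ = ρ * ⟪u, g⟫ := by rw [huw, real_inner_self_eq_norm_mul_norm, mul_assoc]
    _ ≤ ‖u‖ * (ρ * ‖g‖) := by nlinarith [real_inner_le_norm u g]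
    _ ≤ ‖u‖ * ‖T g‖ := mul_le_mul_of_nonneg_left (hρ g) (norm_nonneg u)

theorem Matrix.inner_toLp_row {m n : Type*} [Fintype n] (A : Matrix m n ℝ) (i : m)
    (x : EuclideanSpace ℝ n) : ⟪WithLp.toLp 2 (A i), x⟫ = A.mulVec x i := by
  simp [PiLp.inner_apply, Matrix.mulVec, dotProduct, mul_comm]

theorem Matrix.mul_norm_le_norm_sum_smul_row {n : Type*} [Fintype n] [DecidableEq n]
    {M : Matrix n n ℝ} (hM : IsUnit M) {ρ : ℝ}
    (hρ : ∀ v, ρ * ‖v‖ ≤ ‖Matrix.toEuclideanLin M v‖) (ν : EuclideanSpace ℝ n) :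
    ρ * ‖ν‖ ≤ ‖∑ j, ν j • WithLp.toLp 2 (M j)‖ := by
  refine mul_norm_le_norm_of_forall_inner_eq (T := Matrix.toEuclideanLin M) (fun w => ?_) hρ
    fun x => ?_
  · obtain ⟨v, hv⟩ := Matrix.mulVec_surjective_iff_isUnit.mpr hM w.ofLp
    exact ⟨WithLp.toLp 2 v, by simp [Matrix.toLpLin_apply, hv]⟩
  · simp only [sum_inner, inner_smul_left, Matrix.inner_toLp_row, conj_trivial]
    simp [PiLp.inner_apply, Matrix.toLpLin_apply, mul_comm]

theorem exists_mem_polyhedron_mul_dist_le {ι E : Type*} [Fintype ι] [NormedAddCommGroup E]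
    [InnerProductSpace ℝ E] [FiniteDimensional ℝ E] {n : ℕ} (hn : Module.finrank ℝ E = n)
    {a : ι → E} (ha : Submodule.span ℝ (range a) = ⊤) {ρ : ℝ}
    (hρ : ∀ B : Fin n → ι, LinearIndependent ℝ (a ∘ B) →
      ∀ ν : EuclideanSpace ℝ (Fin n), ρ * ‖ν‖ ≤ ‖∑ j, ν j • a (B j)‖)
    {c : ι → ℝ} {τ : ℝ} (hτ : 0 ≤ τ) (hne : (polyhedron a fun i => c i - τ).Nonempty)
    {y : E} (hy : y ∈ polyhedron a c) :
    ∃ z ∈ polyhedron a (fun i => c i - τ), ρ * dist y z ≤ √n * τ := by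
  subst hn
  obtain ⟨w, hw, hmin⟩ := exists_norm_eq_iInf_of_complete_convex hne
    isClosed_polyhedron.isComplete convex_polyhedron y
  obtain ⟨μ, hμ, hact, hli, hμu⟩ := exists_active_multipliers_of_forall_inner_sub_nonpos hw
    ((norm_eq_iInf_iff_real_inner_le_zero convex_polyhedron hw).mp hmin)
  obtain ⟨B, hB, hμB⟩ := exists_linearIndependent_comp_of_linearIndepOn ha hli
  refine ⟨w, hw, ?_⟩
  rw [dist_eq_norm]
  have hu_sq := norm_sub_sq_le_mul_sum hμ hy hact hμu
  set u := y - w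
  have hμ_off : ∀ i ∉ range B, μ i = 0 := fun i hi => notMem_support.mp fun h => hi (hμB h)
  set ν : EuclideanSpace ℝ (Fin (Module.finrank ℝ E)) := WithLp.toLp 2 (μ ∘ B)
  have hνu : ρ * ‖ν‖ ≤ ‖u‖ := by
    have hsum : ∑ j, ν j • a (B j) = u := hμu ▸ Fintype.sum_of_injective B hB.injective.of_comp _ _
      (fun i hi => by simp [hμ_off i hi]) fun _ => rfl
    simpa [hsum] using hρ B hB ν
  have hνsum : ∑ i, μ i ≤ √(Module.finrank ℝ E) * ‖ν‖ := by
    have hsum : ∑ j, ν j = ∑ i, μ i :=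
      Fintype.sum_of_injective B hB.injective.of_comp _ _ hμ_off fun _ => rfl
    simpa [hsum] using sum_le_sqrt_card_mul_norm ν
  rcases le_or_gt ρ 0 with hρ0 | hρ0
  · nlinarith [norm_nonneg u, Real.sqrt_nonneg (Module.finrank ℝ E)]
  rcases (norm_nonneg u).eq_or_lt with h0 | hpos
  · rw [← h0, mul_zero]; positivity
  refine le_of_mul_le_mul_right ?_ hpos
  calc ρ * ‖u‖ * ‖u‖ = ρ * ‖u‖ ^ 2 := by ring
    _ ≤ ρ * (τ * (√(Module.finrank ℝ E) * ‖ν‖)) := by gcongr; exact hu_sq.trans (by gcongr)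
    _ = √(Module.finrank ℝ E) * τ * (ρ * ‖ν‖) := by ring
    _ ≤ √(Module.finrank ℝ E) * τ * ‖u‖ := by gcongr

/-- For a nonempty compact polytope `D = {x | A x ≤ b}` whose τ-shrunk version
`D_τ = {x | A x + τ·𝟙 ≤ b}` is nonempty, if `ρ > 0` lower-bounds the smallest singular value of
every `d × d` invertible submatrix `A_B` of `A` corresponding to `d` constraints meeting at an
active point of `D` (expressed as `ρ‖v‖ ≤ ‖A_B v‖` for all `v`, in Euclidean norm), then every
`x ∈ ℝ^d` satisfies `dist(x, D_τ) ≤ dist(x, D) + (√d / ρ) τ`. -/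
theorem dist_shrunk_le_dist_add
    (d m : ℕ) (A : Matrix (Fin m) (Fin d) ℝ) (b : Fin m → ℝ)
    (τ ρ : ℝ) (hτ : 0 < τ) (hρ : 0 < ρ)
    (D Dτ : Set (EuclideanSpace ℝ (Fin d)))
    (hD : D = {x : EuclideanSpace ℝ (Fin d) | ∀ i, A.mulVec x i ≤ b i})
    (hDτ : Dτ = {x : EuclideanSpace ℝ (Fin d) | ∀ i, A.mulVec x i + τ ≤ b i})
    (hDne : D.Nonempty) (hDcp : IsCompact D) (hDτne : Dτ.Nonempty)
    (hσ : ∀ B : Fin d → Fin m, Function.Injective B →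
        IsUnit (A.submatrix B (id : Fin d → Fin d)) →
        ∀ v : EuclideanSpace ℝ (Fin d),
          ρ * ‖v‖ ≤ ‖Matrix.toEuclideanLin (A.submatrix B (id : Fin d → Fin d)) v‖) :
    ∀ x : EuclideanSpace ℝ (Fin d),
      Metric.infDist x Dτ ≤ Metric.infDist x D + (Real.sqrt d / ρ) * τ := by
  intro x
  set r : Fin m → EuclideanSpace ℝ (Fin d) := fun i => WithLp.toLp 2 (A i)
  have hDr : D = polyhedron r b := by
    ext z
    simp [hD, r, Matrix.inner_toLp_row]
  have hDτr : Dτ = polyhedron r fun i => b i - τ := by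
    ext z
    simp [hDτ, r, Matrix.inner_toLp_row, le_sub_iff_add_le]
  have hrows : ∀ B : Fin d → Fin m, LinearIndependent ℝ (r ∘ B) →
      ∀ ν : EuclideanSpace ℝ (Fin d), ρ * ‖ν‖ ≤ ‖∑ j, ν j • r (B j)‖ := fun B hB => by
    have hM : IsUnit (A.submatrix B id) := Matrix.linearIndependent_rows_iff_isUnit.mp
      (hB.map' (WithLp.linearEquiv 2 ℝ _).toLinearMap (LinearEquiv.ker _))
    exact Matrix.mul_norm_le_norm_sum_smul_row hM (hσ B hB.injective.of_comp hM)
  obtain ⟨y, hyD, hxy⟩ := hDcp.exists_infDist_eq_dist hDne x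
  obtain ⟨z, hz, hyz⟩ := exists_mem_polyhedron_mul_dist_le finrank_euclideanSpace_fin
    (span_range_eq_top_of_isCompact_polyhedron (hDr ▸ hDcp) (hDr ▸ hDne)) hrows hτ.le
    (hDτr ▸ hDτne) (hDr ▸ hyD)
  calc Metric.infDist x Dτ ≤ dist x z := Metric.infDist_le_dist_of_mem (hDτr ▸ hz)
    _ ≤ dist x y + dist y z := dist_triangle x y z
    _ ≤ Metric.infDist x D + √d / ρ * τ := by
      rw [hxy, div_mul_eq_mul_div]
      gcongr
      exact (le_div_iff₀' hρ).mpr hyz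
end

section
/- Let r₀ > 0, K ≥ 1, and c₁, …, c_K ∈ ℝ^d (repetitions allowed). Consider the N = 2dK points consisting of c_k + r₀·e_j and c_k − r₀·e_j for k ∈ {1,…,K} and j ∈ {1,…,d}, where e_j is the j-th standard basis vector, and let x̄ ∈ ℝ^d be the average of these N points. Then the scatter matrix S = Σ over all N points p of (p − x̄)(p − x̄)ᵀ satisfies S ⪰ (N r₀² / d)·I in the positive semidefinite (Loewner) order; consequently S is invertible and ‖S⁻¹‖ ≤ d / (N r₀²) in operator norm. -/
/-!
Writing `u_k = c_k - x̄`, the points around `c_k` come in pairs `u_k ± r₀ e_j`, and the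
parallelogram law `(u + w)(u + w)ᵀ + (u - w)(u - w)ᵀ = 2 (u uᵀ + w wᵀ)` turns the scatter matrix
into `S = 2d ∑_k u_k u_kᵀ + 2K r₀² I`, since `∑_j e_j e_jᵀ = I`. The first summand is positive
semidefinite, so `S ⪰ 2K r₀² I = (N r₀²/d) I`.
A matrix with `A ⪰ c I`, `c > 0`, is positive definite, and `c ‖y‖² ≤ ⟪y, A y⟫ ≤ ‖y‖ ‖A y‖`
gives `‖A⁻¹‖ ≤ c⁻¹`.
-/

open Matrix

namespace Matrix

variable {n : Type*}

theorem vecMulVec_add_self_add_vecMulVec_sub_self {R : Type*} [CommRing R] (u w : n → R) :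
    vecMulVec (u + w) (u + w) + vecMulVec (u - w) (u - w) =
      (2 : R) • (vecMulVec u u + vecMulVec w w) := by
  ext i j
  simp only [add_apply, smul_apply, vecMulVec_apply, Pi.add_apply, Pi.sub_apply, smul_eq_mul]
  ring

variable [DecidableEq n]

theorem sum_vecMulVec_single_one [Fintype n] {R : Type*} [Semiring R] :
    ∑ j : n, vecMulVec (Pi.single j (1 : R)) (Pi.single j 1) = 1 := by
  simp_rw [← single_eq_single_vecMulVec_single, sum_single_one]

theorem sum_vecMulVec_add_ite_neg_smul_single [Fintype n] {R ι : Type*} [CommRing R]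
    [Fintype ι] (u : ι → n → R) (r : R) :
    ∑ k, ∑ j : n, ∑ s : Bool,
        vecMulVec (u k + (if s then r else -r) • Pi.single j 1)
          (u k + (if s then r else -r) • Pi.single j 1) =
      (2 * Fintype.card n : R) • ∑ k, vecMulVec (u k) (u k) +
        (2 * Fintype.card ι * r ^ 2) • 1 := by
  have hpair : ∀ k j, ∑ s : Bool,
      vecMulVec (u k + (if s then r else -r) • Pi.single j 1)
          (u k + (if s then r else -r) • Pi.single j 1) =
        (2 : R) • vecMulVec (u k) (u k) +
          (2 * r ^ 2) • vecMulVec (Pi.single j 1) (Pi.single j 1) := by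
    intro k j
    rw [Fintype.sum_bool, if_pos rfl, if_neg Bool.false_ne_true, neg_smul, ← sub_eq_add_neg,
      vecMulVec_add_self_add_vecMulVec_sub_self]
    simp only [smul_vecMulVec, vecMulVec_smul, smul_add, smul_smul]
    ring_nf
  simp only [hpair, Finset.sum_add_distrib, ← Finset.smul_sum, sum_vecMulVec_single_one,
    Finset.sum_const, Finset.card_univ, ← Nat.cast_smul_eq_nsmul R, smul_smul]
  rw [mul_right_comm _ (r ^ 2)]

theorem PosSemidef.posDef_of_sub_smul_one {R : Type*} [CommRing R] [NoZeroDivisors R]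
    [PartialOrder R] [IsStrictOrderedRing R] [StarRing R] [StarOrderedRing R]
    {A : Matrix n n R} {c : R} (hc : 0 < c) (hA : (A - c • 1).PosSemidef) : A.PosDef := by
  simpa using PosDef.posSemidef_add hA (PosDef.one.smul hc)

theorem PosSemidef.norm_toEuclideanCLM_inv_le_of_sub_smul_one [Fintype n] {A : Matrix n n ℝ}
    {c : ℝ} (hc : 0 < c) (hA : (A - c • 1).PosSemidef) :
    ‖toEuclideanCLM (𝕜 := ℝ) A⁻¹‖ ≤ c⁻¹ := by
  have hdet : IsUnit A.det := (hA.posDef_of_sub_smul_one hc).isUnit.map detMonoidHom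
  lift c to NNReal using hc.le
  have hcoercive : ∀ x, ‖x‖ ^ 2 * c ≤ ‖inner ℝ (toEuclideanCLM (𝕜 := ℝ) A x) x‖ := by
    intro x
    have hx := hA.dotProduct_mulVec_nonneg x.ofLp
    rw [real_inner_comm, inner_toEuclideanCLM, ← real_inner_self_eq_norm_sq,
      EuclideanSpace.inner_eq_star_dotProduct, star_trivial, Real.norm_eq_abs]
    simp only [star_trivial, sub_mulVec, smul_mulVec, one_mulVec, dotProduct_sub,
      dotProduct_smul, smul_eq_mul] at hx
    linarith [le_abs_self (x.ofLp ⬝ᵥ A *ᵥ x.ofLp)]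
  have hanti := ContinuousLinearMap.antilipschitz_of_forall_le_inner_map _
    (by exact_mod_cast hc) hcoercive
  refine ContinuousLinearMap.opNorm_le_bound _ (by positivity) fun x => ?_
  calc ‖toEuclideanCLM (𝕜 := ℝ) A⁻¹ x‖
      ≤ c⁻¹ * ‖toEuclideanCLM (𝕜 := ℝ) A (toEuclideanCLM (𝕜 := ℝ) A⁻¹ x)‖ := by
        simpa using (toEuclideanCLM (𝕜 := ℝ) A).bound_of_antilipschitz hanti _
    _ = c⁻¹ * ‖x‖ := by
        rw [← mul_apply_eq_comp, ← map_mul, mul_nonsing_inv _ hdet, map_one]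
        rfl

end Matrix

theorem scatter_matrix_bound_general
    (d K : ℕ) (hK : 1 ≤ K) (r₀ : ℝ) (hr₀ : 0 < r₀)
    (c : Fin K → (Fin d → ℝ))
    (p : Fin K × Fin d × Bool → (Fin d → ℝ))
    (hp : ∀ (k : Fin K) (j : Fin d) (s : Bool),
      p (k, j, s) = c k + (if s then r₀ else -r₀) • (Pi.single j 1 : Fin d → ℝ))
    (N : ℕ) (hN : N = 2 * d * K)
    (xbar : Fin d → ℝ)
    (S : Matrix (Fin d) (Fin d) ℝ)
    (hS : S = ∑ i, Matrix.vecMulVec (p i - xbar) (p i - xbar)) :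
    (S - ((N : ℝ) * r₀ ^ 2 / (d : ℝ)) • (1 : Matrix (Fin d) (Fin d) ℝ)).PosSemidef ∧
      IsUnit S ∧
      ‖Matrix.toEuclideanCLM (𝕜 := ℝ) S⁻¹‖ ≤ (d : ℝ) / ((N : ℝ) * r₀ ^ 2) := by
  obtain rfl | hd := Nat.eq_zero_or_pos d
  · refine ⟨?_, isUnit_of_subsingleton S, by simp⟩
    rw [Subsingleton.elim (S - _) 0]
    exact .zero
  have hK' : (0 : ℝ) < K := by exact_mod_cast hK
  have hscale : (N : ℝ) * r₀ ^ 2 / d = 2 * K * r₀ ^ 2 := by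
    subst hN
    push_cast
    field_simp
  have hS_eq : S = (2 * d : ℝ) • ∑ k, vecMulVec (c k - xbar) (c k - xbar) +
      (2 * K * r₀ ^ 2) • 1 := by
    simp only [hS, Fintype.sum_prod_type, hp, add_sub_right_comm]
    simpa using sum_vecMulVec_add_ite_neg_smul_single (fun k => c k - xbar) r₀
  have hpsd : (S - (2 * K * r₀ ^ 2 : ℝ) • 1).PosSemidef := by
    rw [hS_eq, add_sub_cancel_right]
    refine (posSemidef_sum _ fun k _ => ?_).smul (by positivity)
    simpa using posSemidef_vecMulVec_self_star (c k - xbar)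
  refine ⟨hscale ▸ hpsd, (hpsd.posDef_of_sub_smul_one (by positivity)).isUnit, ?_⟩
  rw [← inv_div, hscale]
  exact hpsd.norm_toEuclideanCLM_inv_le_of_sub_smul_one (by positivity)

/-- Scatter-matrix lower bound for the data-collection query points: with
`K ≥ 1` centers `c_k` and the `N = 2dK` query points `c_k ± r₀ e_j`, the scatter matrix
`S = Σ_p (p − x̄)(p − x̄)ᵀ` around the average `x̄` satisfies `S ⪰ (N r₀²/d)·I` in the Loewner
order; consequently `S` is invertible and `‖S⁻¹‖ ≤ d/(N r₀²)` in operator norm. -/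
theorem scatter_matrix_bound
    (d K : ℕ) (hK : 1 ≤ K) (r₀ : ℝ) (hr₀ : 0 < r₀)
    (c : Fin K → (Fin d → ℝ))
    (p : Fin K × Fin d × Bool → (Fin d → ℝ))
    (hp : ∀ (k : Fin K) (j : Fin d) (s : Bool),
      p (k, j, s) = c k + (if s then r₀ else -r₀) • (Pi.single j 1 : Fin d → ℝ))
    (N : ℕ) (hN : N = 2 * d * K)
    (xbar : Fin d → ℝ) (hxbar : xbar = (N : ℝ)⁻¹ • ∑ i, p i)
    (S : Matrix (Fin d) (Fin d) ℝ)
    (hS : S = ∑ i, Matrix.vecMulVec (p i - xbar) (p i - xbar)) :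
    (S - ((N : ℝ) * r₀ ^ 2 / (d : ℝ)) • (1 : Matrix (Fin d) (Fin d) ℝ)).PosSemidef ∧
      IsUnit S ∧
      ‖Matrix.toEuclideanCLM (𝕜 := ℝ) S⁻¹‖ ≤ (d : ℝ) / ((N : ℝ) * r₀ ^ 2) :=
  scatter_matrix_bound_general d K hK r₀ hr₀ c p hp N hN xbar S hS
end

section
/- Let a¹, …, aᵐ ∈ ℝ^d and b ∈ ℝ^m define the polytope D = {x : ⟨aⁱ, x⟩ ≤ bⁱ for all i}, and for τ > 0 let D_τ = {x : ⟨aⁱ, x⟩ ≤ bⁱ − τ for all i} be nonempty. Let α > 0 and suppose ‖aⁱ‖ ≤ 1/(2α) for every i ∈ {1,…,m}. Let η ∈ [0, 1], C ≥ 0, and suppose v̂ ∈ ℝ^d satisfies ‖v̂ − w‖ ≤ C + ατ for some w ∈ D_τ. For x ∈ ℝ^d set x⁺ = (1 − η)x + η v̂ and define the residuals εⁱ(y) = bⁱ − ⟨aⁱ, y⟩. Then for every i ∈ {1,…,m}: εⁱ(x⁺) ≥ (1 − η)·εⁱ(x) + η·τ/2 − η·C/(2α). -/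
local notation "⟪" x ", " y "⟫" => @inner ℝ _ _ x y

/-- Geometric-shrinkage recursion step: with constraints `⟨aⁱ, x⟩ ≤ bⁱ`,
row norms `‖aⁱ‖ ≤ 1/(2α)`, `τ > 0`, `η ∈ [0,1]`, `C ≥ 0`, and `v̂` within distance `C + ατ`
of some point `w` of the τ-shrunk polytope `D_τ` (i.e. `⟨aⁱ, w⟩ ≤ bⁱ − τ` for all `i`),
the residuals `εⁱ(y) = bⁱ − ⟨aⁱ, y⟩` of `x⁺ = (1 − η)x + η v̂` satisfy
`εⁱ(x⁺) ≥ (1 − η)εⁱ(x) + ητ/2 − ηC/(2α)` for every `i`. -/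
theorem geometric_shrinkage_step
    (d m : ℕ) (a : Fin m → EuclideanSpace ℝ (Fin d)) (b : Fin m → ℝ)
    (τ α : ℝ) (hτ : 0 < τ) (hα : 0 < α)
    (ha : ∀ i, ‖a i‖ ≤ 1 / (2 * α))
    (η C : ℝ) (hη0 : 0 ≤ η) (hη1 : η ≤ 1) (hC : 0 ≤ C)
    (vhat : EuclideanSpace ℝ (Fin d))
    (hw : ∃ w : EuclideanSpace ℝ (Fin d),
      (∀ i, ⟪a i, w⟫ ≤ b i - τ) ∧ ‖vhat - w‖ ≤ C + α * τ)
    (x xplus : EuclideanSpace ℝ (Fin d))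
    (hxp : xplus = (1 - η) • x + η • vhat) :
    ∀ i, (1 - η) * (b i - ⟪a i, x⟫) + η * τ / 2 - η * C / (2 * α) ≤
      b i - ⟪a i, xplus⟫ := by
  obtain ⟨w, hw1, hw2⟩ := hw
  intro i
  have hnn : ⟪a i, vhat - w⟫ ≤ ‖a i‖ * ‖vhat - w‖ := real_inner_le_norm _ _
  have hb : ‖a i‖ * ‖vhat - w‖ ≤ (1/(2*α)) * (C + α*τ) :=
    mul_le_mul (ha i) hw2 (norm_nonneg _) (by positivity)
  have hsplit : ⟪a i, vhat⟫ = ⟪a i, w⟫ + ⟪a i, vhat - w⟫ := by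
    rw [inner_sub_right]; ring
  have hkey : τ/2 - C/(2*α) ≤ b i - ⟪a i, vhat⟫ := by
    have h1 := hw1 i
    have hfe : (1/(2*α)) * (C + α*τ) = C/(2*α) + τ/2 := by
      field_simp
    nlinarith [hnn, hb]
  rw [hxp, inner_add_right, real_inner_smul_right, real_inner_smul_right]
  set p := ⟪a i, x⟫ with hp
  set q := ⟪a i, vhat⟫ with hq
  have h2 : η * τ / 2 - η * C / (2 * α) ≤ η * b i - η * q := by
    calc η * τ / 2 - η * C / (2 * α) = η * (τ / 2 - C / (2 * α)) := by ring
      _ ≤ η * (b i - q) := mul_le_mul_of_nonneg_left hkey hη0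
      _ = η * b i - η * q := by ring
  linarith
end

section
/- For every integer t ≥ 1, with η_j := (j + 2)^{−1/2} one has Σ_{k=0}^{t−1} η_k·∏_{j=k+1}^{t−1}(1 − η_j) ≥ (t + 1)^{−1/2}, where the empty product (for k = t − 1) equals 1. -/
/-- Step-size sum lower bound for `η_j = (j+2)^{-1/2}`: for every `t ≥ 1`,
`Σ_{k<t} η_k ∏_{j=k+1}^{t−1} (1 − η_j) ≥ (t+1)^{-1/2}`. -/
theorem stepsize_sum_lower_bound :
    ∀ t : ℕ, 1 ≤ t →
      1 / Real.sqrt ((t : ℝ) + 1) ≤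
        ∑ k ∈ Finset.range t, (1 / Real.sqrt ((k : ℝ) + 2)) *
          ∏ j ∈ Finset.Ico (k + 1) t, (1 - 1 / Real.sqrt ((j : ℝ) + 2)) := by
  intro t ht
  have hterm : ∀ k : ℕ, (0:ℝ) ≤ (1 / Real.sqrt ((k : ℝ) + 2)) *
      ∏ j ∈ Finset.Ico (k + 1) t, (1 - 1 / Real.sqrt ((j : ℝ) + 2)) := by
    intro k
    apply mul_nonneg
    · positivity
    · apply Finset.prod_nonneg
      intro j _
      have h1 : (1:ℝ) ≤ Real.sqrt ((j : ℝ) + 2) := by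
        rw [show (1:ℝ) = Real.sqrt 1 by simp]
        apply Real.sqrt_le_sqrt
        linarith [Nat.cast_nonneg (α := ℝ) j]
      have h2 : (0:ℝ) < Real.sqrt ((j : ℝ) + 2) := by positivity
      have : 1 / Real.sqrt ((j : ℝ) + 2) ≤ 1 := by
        rw [div_le_one h2]; exact h1
      linarith
  have hmem : t - 1 ∈ Finset.range t := by
    simp [Finset.mem_range]; omega
  have hle := Finset.single_le_sum (f := fun k : ℕ => (1 / Real.sqrt ((k : ℝ) + 2)) *
      ∏ j ∈ Finset.Ico (k + 1) t, (1 - 1 / Real.sqrt ((j : ℝ) + 2)))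
      (fun k _ => hterm k) hmem
  have heq : (1 / Real.sqrt (((t-1 : ℕ) : ℝ) + 2)) *
      ∏ j ∈ Finset.Ico ((t-1) + 1) t, (1 - 1 / Real.sqrt ((j : ℝ) + 2)) =
      1 / Real.sqrt ((t : ℝ) + 1) := by
    have h1 : (t - 1) + 1 = t := by omega
    rw [h1, Finset.Ico_self, Finset.prod_empty, mul_one]
    congr 2
    have : ((t - 1 : ℕ) : ℝ) = (t : ℝ) - 1 := by
      have := Nat.cast_sub ht (R := ℝ); simpa using this
    rw [this]; ring
  simpa only [heq] using hle
end

section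
/- Let D ⊆ ℝ^d be a nonempty compact convex set with diameter at most Λ, let f : ℝ^d → ℝ be convex and differentiable with ∇f L-Lipschitz on ℝ^d, let M ≥ 0 satisfy ‖∇f(y)‖ ≤ M for all y ∈ D, and let x* ∈ D minimize f over D. Let T ≥ 1 and let (x_t)_{t=0}^{T−1} be defined by: x_0 ∈ D; for each t, D̂_t ⊆ ℝ^d is a nonempty compact convex set such that every z ∈ D̂_t satisfies dist(z, D) ≤ 1/(t+1) and every z ∈ D satisfies dist(z, D̂_t) ≤ 1/(t+1); v̂_t ∈ D̂_t minimizes ⟨∇f(x_t), ·⟩ over D̂_t; x_{t+1} = x_t + η_t(v̂_t − x_t) with η_t = 2/(t+2); and x_t ∈ D for all t ≤ T − 1. Then f(x_{T−1}) − f(x*) ≤ 2·max{f(x_0) − f(x*), 4M, 2L(Λ + 2)²} / (T + 1). -/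
local notation "⟪" x ", " y "⟫" => @inner ℝ _ _ x y

/-!
Write `e t = f (x t) - f xstar`. Convexity gives `f x + ⟪∇f x, x* - x⟫ ≤ f x*`; since `v̂`
minimizes `⟪∇f x, ·⟫` over `D̂` and `x*` lies within `1/(t+1)` of `D̂`, the same bound holds with
`x*` replaced by `v̂` at the cost `‖∇f x‖/(t+1) ≤ M/(t+1)`. The descent lemma for the `L`-smooth
`f`, together with `‖v̂ - x‖ ≤ Λ + 1` (as `v̂` lies within `1` of `D`), turns this into the
Frank–Wolfe recursion `e (t+1) ≤ (1 - η) e t + η C/(4(t+1)) + η² C/4` with `η = 2/(t+2)` and `C`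
the maximum in the bound, and induction yields `e t ≤ 2C/(t+2)`.
-/

open Set Metric

theorem dist_le_infDist_add_of_forall_dist_le {α : Type*} [PseudoMetricSpace α] {S : Set α}
    {Λ : ℝ} {y : α} (hΛ : ∀ a ∈ S, ∀ b ∈ S, dist a b ≤ Λ) (hy : y ∈ S) (x : α) :
    dist x y ≤ infDist x S + Λ :=
  (dist_le_infDist_add_diam (isBounded_iff.2 ⟨Λ, hΛ⟩) hy).trans <| by
    gcongr
    exact diam_le_of_forall_dist_le (by simpa using hΛ y hy y hy) hΛ

theorem inner_le_inner_add_norm_mul_infDist {F : Type*} [NormedAddCommGroup F]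
    [InnerProductSpace ℝ F] {S : Set F} {g v : F} (hv : v ∈ S)
    (hmin : ∀ w ∈ S, ⟪g, v⟫ ≤ ⟪g, w⟫) (z : F) :
    ⟪g, v⟫ ≤ ⟪g, z⟫ + ‖g‖ * infDist z S := by
  rcases (norm_nonneg g).eq_or_lt with hg | hg
  · simp [norm_eq_zero.1 hg.symm]
  suffices (⟪g, v⟫ - ⟪g, z⟫) / ‖g‖ ≤ infDist z S by
    rw [div_le_iff₀ hg] at this; linarith
  refine (le_infDist ⟨v, hv⟩).2 fun w hw => (div_le_iff₀ hg).2 ?_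
  calc ⟪g, v⟫ - ⟪g, z⟫ ≤ ⟪g, w - z⟫ := by rw [inner_sub_right]; linarith [hmin w hw]
    _ ≤ ‖g‖ * ‖w - z‖ := real_inner_le_norm _ _
    _ = dist z w * ‖g‖ := by rw [dist_eq_norm', mul_comm]

section Smooth

variable {F : Type*} [NormedAddCommGroup F] [InnerProductSpace ℝ F] [CompleteSpace F]
  {f : F → ℝ} {f' : F → F}

theorem HasGradientAt.hasDerivAt_comp_add_smul {g x v : F} {s : ℝ}
    (hf : HasGradientAt f g (x + s • v)) :
    HasDerivAt (fun r : ℝ => f (x + r • v)) ⟪g, v⟫ s := by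
  have hline : HasDerivAt (fun r : ℝ => x + r • v) v s := by
    simpa using ((hasDerivAt_id s).smul_const v).const_add x
  have h := hf.hasFDerivAt.comp_hasDerivAt s hline
  simp only [InnerProductSpace.toDual_apply_apply] at h
  exact h

theorem ConvexOn.add_inner_le_of_hasGradientAt {g x : F} (hfc : ConvexOn ℝ univ f)
    (hf : HasGradientAt f g x) (y : F) : f x + ⟪g, y - x⟫ ≤ f y := by
  have hline : ConvexOn ℝ univ (fun s : ℝ => f (x + s • (y - x))) := by
    have h := hfc.comp_affineMap (AffineMap.lineMap x y)
    rw [preimage_univ] at h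
    have hcomp : (fun s : ℝ => f (x + s • (y - x))) = f ∘ AffineMap.lineMap x y := by
      ext s
      simp [AffineMap.lineMap_apply, add_comm]
    rw [hcomp]
    exact h
  have hslope := hline.le_slope_of_hasDerivAt (mem_univ 0) (mem_univ 1) zero_lt_one
    (HasGradientAt.hasDerivAt_comp_add_smul (by simpa using hf))
  simp only [slope_def_field] at hslope
  norm_num at hslope
  linarith

theorem le_add_inner_add_sq_of_lipschitz_gradient {L : ℝ} (hf : ∀ y, HasGradientAt f (f' y) y)
    (hL : ∀ y z, ‖f' y - f' z‖ ≤ L * ‖y - z‖) (x y : F) :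
    f y ≤ f x + ⟪f' x, y - x⟫ + L / 2 * ‖y - x‖ ^ 2 := by
  set φ : ℝ → ℝ := fun s => f (x + s • (y - x)) - s * ⟪f' x, y - x⟫ - L / 2 * s ^ 2 * ‖y - x‖ ^ 2
  have hφ : ∀ s : ℝ, HasDerivAt φ
      (⟪f' (x + s • (y - x)) - f' x, y - x⟫ - L * s * ‖y - x‖ ^ 2) s := by
    intro s
    have hlin := ((hasDerivAt_id s).mul_const ⟪f' x, y - x⟫)
    have hquad := ((hasDerivAt_pow 2 s).const_mul (L / 2)).mul_const (‖y - x‖ ^ 2)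
    refine (((hf _).hasDerivAt_comp_add_smul.sub hlin).sub hquad).congr_deriv ?_
    rw [inner_sub_left]
    push_cast
    ring
  have hanti : AntitoneOn φ (Icc 0 1) := by
    refine antitoneOn_of_deriv_nonpos (convex_Icc 0 1)
      (fun s _ => (hφ s).continuousAt.continuousWithinAt)
      (fun s _ => (hφ s).differentiableAt.differentiableWithinAt) fun s hs => ?_
    rw [interior_Icc] at hs
    have hlip : ‖f' (x + s • (y - x)) - f' x‖ ≤ L * (s * ‖y - x‖) := by
      simpa [norm_smul, abs_of_pos hs.1] using hL (x + s • (y - x)) x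
    calc deriv φ s = ⟪f' (x + s • (y - x)) - f' x, y - x⟫ - L * s * ‖y - x‖ ^ 2 := (hφ s).deriv
      _ ≤ ‖f' (x + s • (y - x)) - f' x‖ * ‖y - x‖ - L * s * ‖y - x‖ ^ 2 := by
        gcongr; exact real_inner_le_norm _ _
      _ ≤ 0 := by nlinarith [mul_le_mul_of_nonneg_right hlip (norm_nonneg (y - x))]
  have h01 := hanti (left_mem_Icc.2 zero_le_one) (right_mem_Icc.2 zero_le_one) zero_le_one
  simp only [φ] at h01
  norm_num at h01
  linarith

theorem frankWolfe_step_sub_le {L η : ℝ} {S : Set F} {x v z : F} (hfc : ConvexOn ℝ univ f)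
    (hf : ∀ y, HasGradientAt f (f' y) y) (hL : ∀ y z, ‖f' y - f' z‖ ≤ L * ‖y - z‖)
    (hv : v ∈ S) (hmin : ∀ w ∈ S, ⟪f' x, v⟫ ≤ ⟪f' x, w⟫) (hη : 0 ≤ η) :
    f (x + η • (v - x)) - f z ≤
      (1 - η) * (f x - f z) + η * (‖f' x‖ * infDist z S) + L / 2 * η ^ 2 * ‖v - x‖ ^ 2 := by
  have hdescent := le_add_inner_add_sq_of_lipschitz_gradient hf hL x (x + η • (v - x))
  rw [add_sub_cancel_left, real_inner_smul_right, norm_smul, Real.norm_of_nonneg hη] at hdescent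
  have hlin : ⟪f' x, v - x⟫ ≤ f z - f x + ‖f' x‖ * infDist z S := by
    have hgap := hfc.add_inner_le_of_hasGradientAt (hf x) z
    have hv' := inner_le_inner_add_norm_mul_infDist hv hmin z
    rw [inner_sub_right] at hgap ⊢
    linarith
  nlinarith [mul_le_mul_of_nonneg_left hlin hη]

theorem reliableFrankWolfe_step_sub_le {D S : Set F} {Λ L M C : ℝ} {x v z : F} (t : ℕ)
    (hΛ : ∀ a ∈ D, ∀ b ∈ D, ‖a - b‖ ≤ Λ) (hfc : ConvexOn ℝ univ f)
    (hf : ∀ y, HasGradientAt f (f' y) y) (hL : ∀ y z, ‖f' y - f' z‖ ≤ L * ‖y - z‖)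
    (hx : x ∈ D) (hM : ‖f' x‖ ≤ M) (hvD : infDist v D ≤ 1 / ((t : ℝ) + 1))
    (hzS : infDist z S ≤ 1 / ((t : ℝ) + 1)) (hv : v ∈ S)
    (hmin : ∀ w ∈ S, ⟪f' x, v⟫ ≤ ⟪f' x, w⟫) (hMC : 4 * M ≤ C)
    (hLC : 2 * L * (Λ + 2) ^ 2 ≤ C) :
    f (x + (2 / ((t : ℝ) + 2)) • (v - x)) - f z ≤ (1 - 2 / ((t : ℝ) + 2)) * (f x - f z) +
      2 / ((t : ℝ) + 2) * (C / 4 / (t + 1)) + C / 4 * (2 / ((t : ℝ) + 2)) ^ 2 := by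
  have hM0 : 0 ≤ M := (norm_nonneg _).trans hM
  have hδ : 1 / ((t : ℝ) + 1) ≤ 1 := by
    rw [div_le_one (by positivity)]
    linarith [t.cast_nonneg (α := ℝ)]
  have hgrad : ‖f' x‖ * infDist z S ≤ C / 4 / (t + 1) :=
    calc ‖f' x‖ * infDist z S ≤ M * (1 / ((t : ℝ) + 1)) :=
          mul_le_mul hM hzS infDist_nonneg hM0
      _ ≤ C / 4 / (t + 1) := by
          rw [mul_one_div]
          gcongr
          linarith
  have hdiam : ‖v - x‖ ≤ Λ + 2 := by
    have := dist_le_infDist_add_of_forall_dist_le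
      (fun a ha b hb => (dist_eq_norm a b).trans_le (hΛ a ha b hb)) hx v
    rw [dist_eq_norm] at this
    linarith
  have hcurv : L / 2 * ‖v - x‖ ^ 2 ≤ C / 4 := by
    rcases le_or_gt 0 L with hL0 | hL0
    · nlinarith [pow_le_pow_left₀ (norm_nonneg _) hdiam 2]
    · nlinarith [sq_nonneg ‖v - x‖]
  have hη : (0 : ℝ) ≤ 2 / ((t : ℝ) + 2) := by positivity
  nlinarith [frankWolfe_step_sub_le (z := z) hfc hf hL hv hmin hη,
    mul_le_mul_of_nonneg_left hgrad hη,
    mul_le_mul_of_nonneg_left hcurv (sq_nonneg (2 / ((t : ℝ) + 2)))]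

end Smooth

theorem frankWolfe_recursion_step_le {t C : ℝ} (ht : 0 ≤ t) (hC : 0 ≤ C) :
    (1 - 2 / (t + 2)) * (2 * C / (t + 2)) + 2 / (t + 2) * (C / 4 / (t + 1)) +
      C / 4 * (2 / (t + 2)) ^ 2 ≤ 2 * C / (t + 3) := by
  have hgap : 2 * C / (t + 3) - ((1 - 2 / (t + 2)) * (2 * C / (t + 2)) +
      2 / (t + 2) * (C / 4 / (t + 1)) + C / 4 * (2 / (t + 2)) ^ 2) =
      C * (t ^ 2 + 7 * t + 4) / (2 * (t + 1) * (t + 2) ^ 2 * (t + 3)) := by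
    field_simp
    ring
  have : 0 ≤ C * (t ^ 2 + 7 * t + 4) / (2 * (t + 1) * (t + 2) ^ 2 * (t + 3)) := by positivity
  linarith

theorem frankWolfe_recursion_le {e : ℕ → ℝ} {C : ℝ} {T : ℕ} (hC : 0 ≤ C) (h0 : e 0 ≤ C)
    (hstep : ∀ t : ℕ, t + 1 < T → e (t + 1) ≤ (1 - 2 / ((t : ℝ) + 2)) * e t +
      2 / ((t : ℝ) + 2) * (C / 4 / (t + 1)) + C / 4 * (2 / ((t : ℝ) + 2)) ^ 2) :
    ∀ t < T, e t ≤ 2 * C / ((t : ℝ) + 2) := by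
  intro t ht
  induction t with
  | zero => simpa using h0
  | succ t ih =>
    have hη : 0 ≤ 1 - 2 / ((t : ℝ) + 2) := by
      rw [sub_nonneg, div_le_one (by positivity)]
      linarith [t.cast_nonneg (α := ℝ)]
    calc e (t + 1) ≤ (1 - 2 / ((t : ℝ) + 2)) * (2 * C / (t + 2)) +
          2 / ((t : ℝ) + 2) * (C / 4 / (t + 1)) + C / 4 * (2 / ((t : ℝ) + 2)) ^ 2 := by
          grw [← ih (by omega)]
          exact hstep t ht
      _ ≤ 2 * C / ((t : ℝ) + 3) := frankWolfe_recursion_step_le t.cast_nonneg hC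
      _ = 2 * C / (((t + 1 : ℕ) : ℝ) + 2) := by push_cast; ring

theorem reliable_fw_convex_convergence_general
    (d : ℕ) (D : Set (EuclideanSpace ℝ (Fin d)))
    (Λ : ℝ) (hΛ : ∀ x ∈ D, ∀ y ∈ D, ‖x - y‖ ≤ Λ)
    (f : EuclideanSpace ℝ (Fin d) → ℝ) (hfc : ConvexOn ℝ Set.univ f)
    (f' : EuclideanSpace ℝ (Fin d) → EuclideanSpace ℝ (Fin d))
    (hf : ∀ y, HasGradientAt f (f' y) y)
    (L : ℝ) (hL : ∀ y z, ‖f' y - f' z‖ ≤ L * ‖y - z‖)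
    (M : ℝ) (hM : ∀ y ∈ D, ‖f' y‖ ≤ M)
    (xstar : EuclideanSpace ℝ (Fin d)) (hxs : xstar ∈ D)
    (T : ℕ) (hT : 1 ≤ T)
    (x vhat : ℕ → EuclideanSpace ℝ (Fin d))
    (Dhat : ℕ → Set (EuclideanSpace ℝ (Fin d)))
    (h1 : ∀ t < T, ∀ z ∈ Dhat t, Metric.infDist z D ≤ 1 / ((t : ℝ) + 1))
    (h2 : ∀ t < T, ∀ z ∈ D, Metric.infDist z (Dhat t) ≤ 1 / ((t : ℝ) + 1))
    (hvh : ∀ t < T, vhat t ∈ Dhat t ∧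
      ∀ w ∈ Dhat t, ⟪f' (x t), vhat t⟫ ≤ ⟪f' (x t), w⟫)
    (hupd : ∀ t, t + 1 < T →
      x (t + 1) = x t + (2 / ((t : ℝ) + 2)) • (vhat t - x t))
    (hsafe : ∀ t < T, x t ∈ D) :
    f (x (T - 1)) - f xstar ≤
      2 * max (max (f (x 0) - f xstar) (4 * M)) (2 * L * (Λ + 2) ^ 2) / ((T : ℝ) + 1) := by
  set C := max (max (f (x 0) - f xstar) (4 * M)) (2 * L * (Λ + 2) ^ 2)
  have hMC : 4 * M ≤ C := le_max_of_le_left (le_max_right _ _)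
  have hC : 0 ≤ C := by linarith [norm_nonneg (f' (x 0)), hM _ (hsafe 0 hT)]
  have hrate := frankWolfe_recursion_le (T := T) (e := fun t => f (x t) - f xstar) hC
    (le_max_of_le_left (le_max_left _ _)) fun t ht => by
    obtain ⟨hv, hvmin⟩ := hvh t (by omega)
    have hxt := hsafe t (by omega)
    rw [hupd t ht]
    exact reliableFrankWolfe_step_sub_le t hΛ hfc hf hL hxt (hM _ hxt) (h1 t (by omega) _ hv)
      (h2 t (by omega) xstar hxs) hv hvmin hMC (le_max_right _ _)
  convert hrate (T - 1) (by omega) using 2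
  rw [Nat.cast_sub hT]
  ring

/-- `O(1/T)` convergence of Reliable Frank–Wolfe in the convex,
exact-gradient setting: with feasible-set estimates `D̂_t` accurate to within `1/(t+1)` in both
directions, Frank–Wolfe directions `v̂_t` minimizing `⟨∇f(x_t), ·⟩` over `D̂_t`, step sizes
`η_t = 2/(t+2)`, and all iterates feasible, one has
`f(x_{T−1}) − f(x*) ≤ 2 max{f(x_0) − f(x*), 4M, 2L(Λ+2)²}/(T+1)`. -/
theorem reliable_fw_convex_convergence
    (d : ℕ) (D : Set (EuclideanSpace ℝ (Fin d)))
    (hDne : D.Nonempty) (hDcp : IsCompact D) (hDcv : Convex ℝ D)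
    (Λ : ℝ) (hΛ : ∀ x ∈ D, ∀ y ∈ D, ‖x - y‖ ≤ Λ)
    (f : EuclideanSpace ℝ (Fin d) → ℝ) (hfc : ConvexOn ℝ Set.univ f)
    (f' : EuclideanSpace ℝ (Fin d) → EuclideanSpace ℝ (Fin d))
    (hf : ∀ y, HasGradientAt f (f' y) y)
    (L : ℝ) (hL : ∀ y z, ‖f' y - f' z‖ ≤ L * ‖y - z‖)
    (M : ℝ) (hM0 : 0 ≤ M) (hM : ∀ y ∈ D, ‖f' y‖ ≤ M)
    (xstar : EuclideanSpace ℝ (Fin d)) (hxs : xstar ∈ D)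
    (hminf : ∀ y ∈ D, f xstar ≤ f y)
    (T : ℕ) (hT : 1 ≤ T)
    (x vhat : ℕ → EuclideanSpace ℝ (Fin d))
    (Dhat : ℕ → Set (EuclideanSpace ℝ (Fin d)))
    (hx0 : x 0 ∈ D)
    (hDh : ∀ t < T, (Dhat t).Nonempty ∧ IsCompact (Dhat t) ∧ Convex ℝ (Dhat t))
    (h1 : ∀ t < T, ∀ z ∈ Dhat t, Metric.infDist z D ≤ 1 / ((t : ℝ) + 1))
    (h2 : ∀ t < T, ∀ z ∈ D, Metric.infDist z (Dhat t) ≤ 1 / ((t : ℝ) + 1))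
    (hvh : ∀ t < T, vhat t ∈ Dhat t ∧
      ∀ w ∈ Dhat t, ⟪f' (x t), vhat t⟫ ≤ ⟪f' (x t), w⟫)
    (hupd : ∀ t, t + 1 < T →
      x (t + 1) = x t + (2 / ((t : ℝ) + 2)) • (vhat t - x t))
    (hsafe : ∀ t < T, x t ∈ D) :
    f (x (T - 1)) - f xstar ≤
      2 * max (max (f (x 0) - f xstar) (4 * M)) (2 * L * (Λ + 2) ^ 2) / ((T : ℝ) + 1) :=
  reliable_fw_convex_convergence_general d D Λ hΛ f hfc f' hf L hL M hM xstar hxs T hT x vhat Dhat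
    h1 h2 hvh hupd hsafe
end

section
/- Let (e_t)_{t≥0} be a real sequence and C ≥ 0 a constant with e_0 ≤ C, and suppose that for every t ≥ 0: e_{t+1} ≤ (1 − 1/(t+2))·e_t + C/(t+2)^{3/2}. Then e_t ≤ 2C/√(t+2) for every t ≥ 0. -/
private lemma aux_key (C s a b : ℝ) (hC : 0 ≤ C) (hs1 : 1 ≤ s)
    (ha : 0 < a) (hb : 0 < b) (ha2 : a ^ 2 = s) (hb2 : b ^ 2 = s + 1) :
    C * (2 * s - 1) / a ^ 3 ≤ 2 * C / b := by
  rw [div_le_div_iff₀ (by positivity) hb]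
  have h1 : ((2 * s - 1) * b) ^ 2 ≤ (2 * a ^ 3) ^ 2 := by
    have e1 : ((2 * s - 1) * b) ^ 2 = (2 * s - 1) ^ 2 * (s + 1) := by
      rw [mul_pow, hb2]
    have e2 : (2 * a ^ 3) ^ 2 = 4 * s ^ 3 := by
      have : (2 * a ^ 3) ^ 2 = 4 * (a ^ 2) ^ 3 := by ring
      rw [this, ha2]
    rw [e1, e2]; nlinarith [hs1]
  have h3 : (2 * s - 1) * b ≤ 2 * a ^ 3 := by
    nlinarith [h1, ha, hb, hs1, pow_pos ha 3]
  nlinarith [mul_le_mul_of_nonneg_left h3 hC, hb, hC]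

/-- Induction lemma for the `O(1/√t)` rate: if `e_0 ≤ C` with `C ≥ 0` and
`e_{t+1} ≤ (1 − 1/(t+2)) e_t + C/(t+2)^{3/2}` for all `t`, then `e_t ≤ 2C/√(t+2)` for all
`t`. -/
theorem rate_one_over_sqrt_t_induction
    (e : ℕ → ℝ) (C : ℝ) (hC : 0 ≤ C) (h0 : e 0 ≤ C)
    (hrec : ∀ t : ℕ, e (t + 1) ≤
      (1 - 1 / ((t : ℝ) + 2)) * e t + C / ((t : ℝ) + 2) ^ ((3 : ℝ) / 2)) :
    ∀ t : ℕ, e t ≤ 2 * C / Real.sqrt ((t : ℝ) + 2) := by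
  intro t
  induction t with
  | zero =>
    simp only [Nat.cast_zero, zero_add]
    have ha : Real.sqrt 2 > 0 := Real.sqrt_pos.mpr (by norm_num)
    have ha2 : Real.sqrt 2 ^ 2 = 2 := Real.sq_sqrt (by norm_num)
    have : C ≤ 2 * C / Real.sqrt 2 := by
      rw [le_div_iff₀ ha]
      nlinarith [mul_nonneg hC ha.le, ha2, ha]
    linarith
  | succ t ih =>
    have hs : (0:ℝ) < (t : ℝ) + 2 := by positivity
    set s : ℝ := (t : ℝ) + 2 with hsdef
    have a_pos : 0 < Real.sqrt s := Real.sqrt_pos.mpr hs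
    have ha2 : Real.sqrt s ^ 2 = s := Real.sq_sqrt hs.le
    have hb : (0:ℝ) < s + 1 := by linarith
    have b_pos : 0 < Real.sqrt (s + 1) := Real.sqrt_pos.mpr hb
    have hb2 : Real.sqrt (s + 1) ^ 2 = s + 1 := Real.sq_sqrt hb.le
    have hpow : s ^ ((3:ℝ)/2) = Real.sqrt s ^ 3 := by
      have : s ^ ((3:ℝ)/2) = s ^ (1:ℝ) * s ^ ((1:ℝ)/2) := by
        rw [← Real.rpow_add hs]; norm_num
      rw [this, Real.rpow_one, ← Real.sqrt_eq_rpow]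
      nlinarith [ha2]
    have hcast : ((t + 1 : ℕ) : ℝ) + 2 = s + 1 := by push_cast; ring
    rw [hcast]
    have hcoef : (0:ℝ) ≤ 1 - 1 / s := by
      rw [sub_nonneg, div_le_one hs]; linarith
    have step : e (t + 1) ≤ (1 - 1 / s) * (2 * C / Real.sqrt s) + C / Real.sqrt s ^ 3 := by
      calc e (t + 1) ≤ (1 - 1 / s) * e t + C / s ^ ((3:ℝ)/2) := hrec t
        _ ≤ (1 - 1 / s) * (2 * C / Real.sqrt s) + C / Real.sqrt s ^ 3 := by
            rw [hpow]
            exact add_le_add (mul_le_mul_of_nonneg_left ih hcoef) le_rfl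
    have key : (1 - 1 / s) * (2 * C / Real.sqrt s) + C / Real.sqrt s ^ 3
        ≤ 2 * C / Real.sqrt (s + 1) := by
      set a := Real.sqrt s
      set b := Real.sqrt (s + 1)
      have lhs_eq : (1 - 1 / s) * (2 * C / a) + C / a ^ 3 = C * (2 * s - 1) / a ^ 3 := by
        rw [← ha2]
        field_simp
        ring
      rw [lhs_eq]
      have hs1 : (1:ℝ) ≤ s := by rw [hsdef]; have : (0:ℝ) ≤ (t:ℝ) := Nat.cast_nonneg t; linarith
      exact aux_key C s a b hC hs1 a_pos b_pos ha2 hb2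
    exact step.trans key
end
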